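/- arXiv:1403.6641 — 4 statements merged into one kernel-verified Lean document; each statement's English description precedes it below -/
import Mathlib

section
/- Let H : ℝ × (Fin 2 → ℝ) → ℝ be continuously differentiable and define G(θ, φ) := H(θ, R(θ).mulVec φ). Then for all θ ∈ ℝ and φ ∈ (Fin 2 → ℝ), the partial derivative of G with respect to its first argument satisfies ∂G/∂θ (θ, φ) = ∂H/∂θ (θ, R(θ).mulVec φ) − ⟨φ, J.mulVec (∇₂G(θ, φ))⟩, where ∇₂G(θ, φ) denotes the gradient of G with respect to its second argument (for the Euclidean inner product ⟨·,·⟩). -/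
open scoped RealInnerProductSpace

/-- The 2×2 rotation matrix of angle `θ`. -/
noncomputable def R (θ : ℝ) : Matrix (Fin 2) (Fin 2) ℝ :=
  !![Real.cos θ, -Real.sin θ; Real.sin θ, Real.cos θ]

/-- The 2×2 matrix `J` (rotation by `π/2`). -/
def J : Matrix (Fin 2) (Fin 2) ℝ := !![0, -1; 1, 0]

/-!
Differentiating `θ ↦ H (θ, R θ φ)` by the chain rule gives `∂H/∂θ` plus the derivative of `H` in
its second slot along `d/dθ (R θ φ) = J R θ φ`, i.e. `⟪∇₂H, J R θ φ⟫`. Since `∇₂G = (R θ)ᵀ ∇₂H` and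
`(J R θ)ᵀ = -J (R θ)ᵀ` (`J` is skew and commutes with rotations), this term equals `-⟪φ, J ∇₂G⟫`.
-/

open scoped Matrix

theorem deriv_comp_prodMk {𝕜 E F : Type*} [NontriviallyNormedField 𝕜] [NormedAddCommGroup E]
    [NormedSpace 𝕜 E] [NormedAddCommGroup F] [NormedSpace 𝕜 F] {H : 𝕜 × E → F} {c : 𝕜 → E}
    {v : E} {t : 𝕜} (hH : DifferentiableAt 𝕜 H (t, c t)) (hc : HasDerivAt c v t) :
    deriv (fun s => H (s, c s)) t
      = deriv (fun s => H (s, c t)) t + fderiv 𝕜 (fun y => H (t, y)) (c t) v := by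
  set f' := fderiv 𝕜 H (t, c t)
  have hH' : HasFDerivAt H f' (t, c t) := hH.hasFDerivAt
  have hcurve : HasDerivAt (fun s => H (s, c s)) (f' (1, v)) t :=
    hH'.comp_hasDerivAt t ((hasDerivAt_id t).prodMk hc)
  have hfirst : HasDerivAt (fun s => H (s, c t)) (f' (1, 0)) t :=
    hH'.comp_hasDerivAt t ((hasDerivAt_id t).prodMk (hasDerivAt_const t (c t)))
  have hsecond : HasFDerivAt (fun y => H (t, y)) (f'.comp (.inr 𝕜 𝕜 E)) (c t) :=
    hH'.comp (c t) (hasFDerivAt_prodMk_right t (c t))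
  rw [hcurve.deriv, hfirst.deriv, hsecond.fderiv, ContinuousLinearMap.comp_apply,
    ContinuousLinearMap.inr_apply, ← map_add, Prod.mk_add_mk, add_zero, zero_add]

theorem HasGradientAt.comp_continuousLinearMap {𝕜 E F : Type*} [RCLike 𝕜]
    [NormedAddCommGroup E] [InnerProductSpace 𝕜 E] [CompleteSpace E]
    [NormedAddCommGroup F] [InnerProductSpace 𝕜 F] [CompleteSpace F] {g : F → 𝕜} {g' : F} {x : E}
    (L : E →L[𝕜] F)
    (hg : HasGradientAt g g' (L x)) : HasGradientAt (g ∘ L) (L.adjoint g') x := by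
  rw [hasGradientAt_iff_hasFDerivAt] at hg ⊢
  refine (hg.comp x L.hasFDerivAt).congr_fderiv ?_
  ext y
  simp [ContinuousLinearMap.adjoint_inner_left]

theorem HasGradientAt.comp_toLp_mulVec {n : Type*} [Fintype n] [DecidableEq n]
    {g : EuclideanSpace ℝ n → ℝ} {g' : EuclideanSpace ℝ n} {x : EuclideanSpace ℝ n}
    (M : Matrix n n ℝ) (hg : HasGradientAt g g' (WithLp.toLp 2 (M *ᵥ x))) :
    HasGradientAt (fun y : EuclideanSpace ℝ n => g (WithLp.toLp 2 (M *ᵥ y)))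
      (WithLp.toLp 2 (Mᵀ *ᵥ g')) x := by
  have h := hg.comp_continuousLinearMap (Matrix.toEuclideanCLM (𝕜 := ℝ) M)
  rwa [← ContinuousLinearMap.star_eq_adjoint, ← map_star, Matrix.star_eq_conjTranspose,
    Matrix.conjTranspose_eq_transpose_of_trivial] at h

theorem R_eq_cos_smul_one_add_sin_smul_J (θ : ℝ) : R θ = Real.cos θ • 1 + Real.sin θ • J := by
  ext i j; fin_cases i <;> fin_cases j <;> simp [R, J]

theorem J_mul_J : J * J = -1 := by
  ext i j; fin_cases i <;> fin_cases j <;> simp [J]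

theorem transpose_J_mul_R (θ : ℝ) : (J * R θ)ᵀ = -(J * (R θ)ᵀ) := by
  ext i j; fin_cases i <;> fin_cases j <;> simp [R, J, Matrix.vecMul, dotProduct]

theorem R_mulVec (θ : ℝ) (v : Fin 2 → ℝ) :
    R θ *ᵥ v = Real.cos θ • v + Real.sin θ • (J *ᵥ v) := by
  rw [R_eq_cos_smul_one_add_sin_smul_J, Matrix.add_mulVec, Matrix.smul_mulVec,
    Matrix.smul_mulVec, Matrix.one_mulVec]

theorem hasDerivAt_toLp_R_mulVec (θ : ℝ) (φ : EuclideanSpace ℝ (Fin 2)) :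
    HasDerivAt (fun t => WithLp.toLp 2 (R t *ᵥ φ)) (WithLp.toLp 2 (J *ᵥ (R θ *ᵥ φ))) θ := by
  have hcurve : (fun t => WithLp.toLp 2 (R t *ᵥ φ))
      = fun t => Real.cos t • φ + Real.sin t • WithLp.toLp 2 (J *ᵥ φ) := by
    ext t : 1
    simp only [R_mulVec, WithLp.toLp_add, WithLp.toLp_smul, WithLp.toLp_ofLp]
  rw [hcurve]
  refine (((Real.hasDerivAt_cos θ).smul_const φ).add
    ((Real.hasDerivAt_sin θ).smul_const (WithLp.toLp 2 (J *ᵥ φ)))).congr_deriv ?_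
  rw [R_mulVec, Matrix.mulVec_add, Matrix.mulVec_smul, Matrix.mulVec_smul, Matrix.mulVec_mulVec,
    J_mul_J, Matrix.neg_mulVec, Matrix.one_mulVec]
  simp only [WithLp.toLp_add, WithLp.toLp_smul, WithLp.toLp_neg, WithLp.toLp_ofLp]
  module

theorem inner_toLp_J_mulVec_R_mulVec (θ : ℝ) (a φ : EuclideanSpace ℝ (Fin 2)) :
    ⟪a, WithLp.toLp 2 (J *ᵥ (R θ *ᵥ φ))⟫ = -⟪φ, WithLp.toLp 2 (J *ᵥ ((R θ)ᵀ *ᵥ a))⟫ := by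
  simp only [EuclideanSpace.inner_eq_star_dotProduct, star_trivial, Matrix.mulVec_mulVec]
  rw [dotProduct_comm, Matrix.dotProduct_mulVec, ← Matrix.mulVec_transpose, transpose_J_mul_R,
    Matrix.neg_mulVec, neg_dotProduct, dotProduct_comm]

/-- Angular partial derivative of the Hamiltonian in the dq frame: with
`G (θ, φ) = H (θ, R θ • φ)`, one has
`∂G/∂θ = ∂H/∂θ - ⟪φ, J (∇₂ G)⟫`. -/
theorem dq_frame_angular_derivative
    (H : ℝ × EuclideanSpace ℝ (Fin 2) → ℝ) (hH : ContDiff ℝ 1 H) :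
    ∀ (θ : ℝ) (φ : EuclideanSpace ℝ (Fin 2)),
      deriv (fun θ' => H (θ', WithLp.toLp 2 ((R θ').mulVec φ))) θ
        = deriv (fun θ' => H (θ', WithLp.toLp 2 ((R θ).mulVec φ))) θ
          - @inner ℝ (EuclideanSpace ℝ (Fin 2)) _ φ
              (WithLp.toLp 2 (J.mulVec
                ((gradient (fun ψ : EuclideanSpace ℝ (Fin 2) => H (θ, WithLp.toLp 2 ((R θ).mulVec ψ))) φ :
                    EuclideanSpace ℝ (Fin 2)) : Fin 2 → ℝ))) := by
  intro θ φ
  have hd : Differentiable ℝ H := hH.differentiable one_ne_zero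
  have hslice : HasGradientAt (fun y => H (θ, y))
      (gradient (fun y => H (θ, y)) (WithLp.toLp 2 (R θ *ᵥ φ))) (WithLp.toLp 2 (R θ *ᵥ φ)) :=
    ((hd _).comp _ (differentiableAt_const θ |>.prodMk differentiableAt_id)).hasGradientAt
  rw [deriv_comp_prodMk (hd _) (hasDerivAt_toLp_R_mulVec θ φ), ← inner_gradient_left,
    inner_toLp_J_mulVec_R_mulVec, (hslice.comp_toLp_mulVec (R θ)).gradient, sub_eq_add_neg]
end

section
/- Let H : ℝ × (Fin 3 → ℝ) → ℝ satisfy the phase-permutation symmetry H(θ, φ) = H(θ + 2π/3, P.mulVec φ) for all θ ∈ ℝ and φ ∈ (Fin 3 → ℝ). Define G(θ, φ) := H(θ, Qᵀ.mulVec (R₃(θ).mulVec φ)). Then G(θ + 2π/3, φ) = G(θ, φ) for all θ and φ, i.e. the Hamiltonian expressed in the dq0 frame is 2π/3-periodic in θ. -/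
/-!
The Clarke transform intertwines the cyclic phase shift with a rotation of the dq0 frame:
`P Qᵀ = Qᵀ R₃(2π/3)`. Since `R₃` is additive in the angle, `P Qᵀ R₃(θ) = Qᵀ R₃(θ + 2π/3)`, and the
phase-permutation symmetry of `H` at the point `Qᵀ R₃(θ) φ` is exactly the periodicity of `G`.
-/

open Real

/-- The Clarke transformation matrix. -/
noncomputable def Qc : Matrix (Fin 3) (Fin 3) ℝ :=
  Real.sqrt (2 / 3) •
    !![1, -(1 / 2 : ℝ), -(1 / 2);
       0, Real.sqrt 3 / 2, -(Real.sqrt 3 / 2);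
       1 / Real.sqrt 2, 1 / Real.sqrt 2, 1 / Real.sqrt 2]

/-- The cyclic permutation matrix sending `(x₁, x₂, x₃)` to `(x₃, x₁, x₂)`. -/
def Pc : Matrix (Fin 3) (Fin 3) ℝ := !![0, 0, 1; 1, 0, 0; 0, 1, 0]

/-- Rotation of the first two coordinates by `θ`, fixing the third. -/
noncomputable def R₃ (θ : ℝ) : Matrix (Fin 3) (Fin 3) ℝ :=
  !![Real.cos θ, -Real.sin θ, 0; Real.sin θ, Real.cos θ, 0; 0, 0, 1]

open Matrix

theorem R₃_add (α β : ℝ) : R₃ (α + β) = R₃ α * R₃ β := by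
  ext i j
  fin_cases i <;> fin_cases j <;>
    simp [R₃, Matrix.mul_apply, Fin.sum_univ_three, cos_add, sin_add] <;> ring

theorem R₃_two_pi_div_three :
    R₃ (2 * π / 3) = !![-(1 / 2), -(√3 / 2), 0; √3 / 2, -(1 / 2), 0; 0, 0, 1] := by
  have hπ : 2 * π / 3 = π - π / 3 := by ring
  rw [R₃, hπ, cos_pi_sub, sin_pi_sub, cos_pi_div_three, sin_pi_div_three]

theorem Pc_mul_Qc_transpose : Pc * Qcᵀ = Qcᵀ * R₃ (2 * π / 3) := by
  rw [R₃_two_pi_div_three]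
  ext i j
  fin_cases i <;> fin_cases j <;>
    simp [Pc, Qc, Matrix.mul_apply, Fin.sum_univ_three] <;> ring_nf <;> simp <;> ring

theorem Pc_mulVec_dq0 (θ : ℝ) (φ : Fin 3 → ℝ) :
    Pc *ᵥ (Qcᵀ *ᵥ (R₃ θ *ᵥ φ)) = Qcᵀ *ᵥ (R₃ (θ + 2 * π / 3) *ᵥ φ) := by
  rw [mulVec_mulVec, mulVec_mulVec, mulVec_mulVec, Pc_mul_Qc_transpose, add_comm, R₃_add,
    Matrix.mul_assoc]

/-- Phase-permutation symmetry in the dq0 frame: if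
`H (θ, φ) = H (θ + 2π/3, P φ)` for all `θ, φ`, then the dq0-frame Hamiltonian
`G (θ, φ) = H (θ, Qᵀ (R₃ θ) φ)` is `2π/3`-periodic in `θ`. -/
theorem dq0_phase_permutation_periodicity
    (H : ℝ × (Fin 3 → ℝ) → ℝ)
    (hsym : ∀ (θ : ℝ) (φ : Fin 3 → ℝ), H (θ, φ) = H (θ + 2 * π / 3, Pc.mulVec φ)) :
    ∀ (θ : ℝ) (φ : Fin 3 → ℝ),
      H (θ + 2 * π / 3, Qc.transpose.mulVec ((R₃ (θ + 2 * π / 3)).mulVec φ))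
        = H (θ, Qc.transpose.mulVec ((R₃ θ).mulVec φ)) := by
  intro θ φ
  rw [hsym θ, Pc_mulVec_dq0]
end

section
/- Let H : ℝ × (Fin 3 → ℝ) → ℝ satisfy the central symmetry H(θ, φ) = H(θ + π, −φ) for all θ ∈ ℝ and φ ∈ (Fin 3 → ℝ). Define G(θ, φ) := H(θ, Qᵀ.mulVec (R₃(θ).mulVec φ)). Then for all θ and all φ = (φ₀, φ₁, φ₂), G(θ + π, φ) = G(θ, (φ₀, φ₁, −φ₂)); i.e. in the dq0 frame the Hamiltonian satisfies H^{dq0}(θ, φ^d, φ^q, φ^0) = H^{dq0}(θ + π, φ^d, φ^q, −φ^0). -/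
open Real

theorem R₃_add_pi (θ : ℝ) : R₃ (θ + π) = R₃ θ * Matrix.diagonal ![-1, -1, 1] := by
  ext i j
  fin_cases i <;> fin_cases j <;>
    simp [R₃, Matrix.mul_apply, Fin.sum_univ_three, cos_add_pi, sin_add_pi]

theorem R₃_add_pi_mulVec (θ : ℝ) (φ : Fin 3 → ℝ) :
    (R₃ (θ + π)).mulVec φ = -(R₃ θ).mulVec ![φ 0, φ 1, -φ 2] := by
  have hflip : (Matrix.diagonal ![-1, -1, 1]).mulVec φ = -![φ 0, φ 1, -φ 2] := by
    ext i
    fin_cases i <;> simp [Matrix.mulVec_diagonal]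
  rw [R₃_add_pi, ← Matrix.mulVec_mulVec, hflip, Matrix.mulVec_neg]

/-- Central symmetry in the dq0 frame: if `H (θ, φ) = H (θ + π, -φ)` for all
`θ, φ`, then the dq0-frame Hamiltonian `G (θ, φ) = H (θ, Qᵀ (R₃ θ) φ)`
satisfies `G (θ + π, φ) = G (θ, (φ₀, φ₁, -φ₂))`. -/
theorem dq0_central_symmetry
    (H : ℝ × (Fin 3 → ℝ) → ℝ)
    (hsym : ∀ (θ : ℝ) (φ : Fin 3 → ℝ), H (θ, φ) = H (θ + π, -φ)) :
    ∀ (θ : ℝ) (φ : Fin 3 → ℝ),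
      H (θ + π, Qc.transpose.mulVec ((R₃ (θ + π)).mulVec φ))
        = H (θ, Qc.transpose.mulVec ((R₃ θ).mulVec ![φ 0, φ 1, -φ 2])) := by
  intro θ φ
  rw [R₃_add_pi_mulVec, Matrix.mulVec_neg, ← hsym]
end

section
/- Let H : ℝ × ℝ × (Fin 3 → ℝ) → ℝ satisfy the orientation symmetry H(θ, ρ, φ) = H(−θ, −ρ, O.mulVec φ) for all θ, ρ ∈ ℝ and φ ∈ (Fin 3 → ℝ). Define G(θ, ρ, φ) := H(θ, ρ, Qᵀ.mulVec (R₃(θ).mulVec φ)). Then for all θ, ρ and all φ = (φ₀, φ₁, φ₂), G(θ, ρ, φ) = G(−θ, −ρ, (φ₀, −φ₁, φ₂)); i.e. in the dq0 frame the Hamiltonian satisfies H^{dq0}(θ, ρ, φ^d, φ^q, φ^0) = H^{dq0}(−θ, −ρ, φ^d, −φ^q, φ^0). -/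
open Real

/-- The permutation matrix swapping the second and third coordinates. -/
def Oc : Matrix (Fin 3) (Fin 3) ℝ := !![1, 0, 0; 0, 0, 1; 0, 1, 0]

/-! The reflection `S = diag(1, -1, 1)` of the `q`-axis intertwines both frame changes:
conjugating the rotation by `S` reverses its angle, and in phase coordinates it becomes the
swap `O` of phases `b` and `c`. Hence `Qᵀ R₃(-θ) S = Qᵀ S R₃(θ) = O Qᵀ R₃(θ)`, and the
symmetry of `H` transports to the dq0 frame. -/

open Matrix

def reflectQ : Matrix (Fin 3) (Fin 3) ℝ := diagonal ![1, -1, 1]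

lemma reflectQ_mulVec (φ : Fin 3 → ℝ) : reflectQ *ᵥ φ = ![φ 0, -φ 1, φ 2] := by
  ext i
  fin_cases i <;> simp [reflectQ, mulVec_diagonal]

lemma R₃_neg_mul_reflectQ (θ : ℝ) : R₃ (-θ) * reflectQ = reflectQ * R₃ θ := by
  ext i j
  fin_cases i <;> fin_cases j <;>
    simp [R₃, reflectQ, mul_apply, Fin.sum_univ_three]

lemma transpose_Qc_mul_reflectQ : Qcᵀ * reflectQ = Oc * Qcᵀ := by
  ext i j
  fin_cases i <;> fin_cases j <;>
    simp [Qc, Oc, reflectQ, mul_apply, Fin.sum_univ_three]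

lemma transpose_Qc_mulVec_R₃_neg_reflectQ (θ : ℝ) (φ : Fin 3 → ℝ) :
    Qcᵀ *ᵥ (R₃ (-θ) *ᵥ (reflectQ *ᵥ φ)) = Oc *ᵥ (Qcᵀ *ᵥ (R₃ θ *ᵥ φ)) := by
  simp only [mulVec_mulVec, ← Matrix.mul_assoc, R₃_neg_mul_reflectQ,
    transpose_Qc_mul_reflectQ]

/-- Orientation symmetry in the dq0 frame: if `H (θ, ρ, φ) = H (-θ, -ρ, O φ)`
for all `θ, ρ, φ`, then the dq0-frame Hamiltonian
`G (θ, ρ, φ) = H (θ, ρ, Qᵀ (R₃ θ) φ)` satisfies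
`G (θ, ρ, φ) = G (-θ, -ρ, (φ₀, -φ₁, φ₂))`. -/
theorem dq0_orientation_symmetry
    (H : ℝ × ℝ × (Fin 3 → ℝ) → ℝ)
    (hsym : ∀ (θ ρ : ℝ) (φ : Fin 3 → ℝ), H (θ, ρ, φ) = H (-θ, -ρ, Oc.mulVec φ)) :
    ∀ (θ ρ : ℝ) (φ : Fin 3 → ℝ),
      H (θ, ρ, Qc.transpose.mulVec ((R₃ θ).mulVec φ))
        = H (-θ, -ρ, Qc.transpose.mulVec ((R₃ (-θ)).mulVec ![φ 0, -φ 1, φ 2])) := by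
  intro θ ρ φ
  rw [← reflectQ_mulVec, transpose_Qc_mulVec_R₃_neg_reflectQ]
  exact hsym θ ρ _
end
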